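/- Let p be an odd prime, let T be an element of ℤ/pℤ, and let D be a nonzero element of ℤ/pℤ. Then the number of matrices g ∈ GL₂(ℤ/pℤ) with trace equal to T and determinant equal to D is exactly p² + p·χ(T² − 4D) (as an equality of integers), where χ is the quadratic character of the field ℤ/pℤ (so χ(0) = 0, χ(u) = 1 if u is a nonzero square, and χ(u) = −1 if u is a nonsquare). -/

import Mathlib

/-!
A matrix with trace `T` is `!![a, b; c, T - a]`, and its determinant is `D` iff
`b * c = a * (T - a) - D`. Over a field with `q` elements, `b * c = v` has `q - 1` solutions
for `v ≠ 0` and `2 * q - 1` for `v = 0`, so the count is `q * (q - 1) + q * N`, where `N` is the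
number of roots of `a * (T - a) = D`. Completing the square, `N` is the number of square roots
of `T ^ 2 - 4 * D`, that is `1 + χ (T ^ 2 - 4 * D)`. For `D ≠ 0` all these matrices are invertible.
-/

open Matrix

lemma Matrix.GeneralLinearGroup.natCard_setOf_eq_of_isUnit_det {n R : Type*} [Fintype n]
    [DecidableEq n] [CommRing R] (P : Matrix n n R → Prop) (hP : ∀ M, P M → IsUnit M.det) :
    Nat.card {g : GL n R | P g} = Nat.card {M : Matrix n n R | P M} :=
  Nat.card_congr
    { toFun := fun g => ⟨g.1, g.2⟩
      invFun := fun M => ⟨GeneralLinearGroup.mk'' M (hP M M.2), M.2⟩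
      left_inv := fun g => by ext; rfl
      right_inv := fun M => rfl }

def Matrix.finTwoTraceDetEquiv {R : Type*} [CommRing R] (T D : R) :
    {M : Matrix (Fin 2) (Fin 2) R | M.trace = T ∧ M.det = D} ≃
      Σ a : R, {x : R × R // x.1 * x.2 = a * (T - a) - D} where
  toFun M := ⟨M.1 0 0, (M.1 0 1, M.1 1 0), by
    obtain ⟨M, hT, hD⟩ := M
    rw [trace_fin_two] at hT
    rw [det_fin_two] at hD
    linear_combination M 0 0 * hT - hD⟩
  invFun x := ⟨!![x.1, x.2.1.1; x.2.1.2, T - x.1], by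
    simp [trace_fin_two, det_fin_two, x.2.2]⟩
  left_inv M := by
    obtain ⟨M, hT, -⟩ := M
    ext i j
    fin_cases i <;> fin_cases j <;> simp [← hT, trace_fin_two]
  right_inv _ := rfl

section FiniteField

variable {F : Type*} [Field F] [Fintype F] [DecidableEq F]

lemma FiniteField.natCard_mul_eq (v : F) :
    (Nat.card {x : F × F // x.1 * x.2 = v} : ℤ) =
      Fintype.card F - 1 + if v = 0 then (Fintype.card F : ℤ) else 0 := by
  have fiber (b : F) : Nat.card {c : F // b * c = v} =
      if b = 0 then (if v = 0 then Fintype.card F else 0) else 1 := by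
    rw [Nat.card_eq_fintype_card, Fintype.card_subtype]
    split_ifs with hb hv
    · simp [hb, hv]
    · simp [hb, Ne.symm hv]
    · simp [← eq_inv_mul_iff_mul_eq₀ hb, Finset.filter_eq']
  have hcompl :
      ∑ b ∈ ({0}ᶜ : Finset F), Nat.card {c : F // b * c = v} = Fintype.card F - 1 := by
    rw [Finset.sum_congr rfl fun b hb => by rw [fiber, if_neg (by simpa using hb)]]
    simp [Finset.card_compl]
  rw [Nat.card_congr (Equiv.subtypeProdEquivSigmaSubtype fun b c => b * c = v), Nat.card_sigma,
    Fintype.sum_eq_add_sum_compl 0, hcompl, fiber, if_pos rfl, Nat.cast_add,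
    Nat.cast_pred Fintype.card_pos]
  split_ifs <;> push_cast <;> ring

lemma FiniteField.natCard_mul_sub_eq (hF : ringChar F ≠ 2) (T D : F) :
    (Nat.card {a : F // a * (T - a) = D} : ℤ) = quadraticChar F (T ^ 2 - 4 * D) + 1 := by
  have h2 : (2 : F) ≠ 0 := Ring.two_ne_zero hF
  have h4 : (4 : F) ≠ 0 := by
    rw [show (4 : F) = 2 * 2 by norm_num]
    exact mul_ne_zero h2 h2
  rw [← quadraticChar_card_sqrts hF, Set.toFinset_card, ← Nat.card_eq_fintype_card]
  norm_cast
  refine Nat.card_congr (Equiv.subtypeEquiv ((Equiv.mulLeft₀ 2 h2).trans (Equiv.subRight T)) ?_)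
  intro a
  show a * (T - a) = D ↔ (2 * a - T) ^ 2 = T ^ 2 - 4 * D
  rw [show (2 * a - T) ^ 2 = T ^ 2 - 4 * (a * (T - a)) by ring, sub_right_inj, mul_right_inj' h4]

lemma Matrix.natCard_trace_det_eq (hF : ringChar F ≠ 2) (T D : F) :
    (Nat.card {M : Matrix (Fin 2) (Fin 2) F | M.trace = T ∧ M.det = D} : ℤ) =
      (Fintype.card F : ℤ) ^ 2 + Fintype.card F * quadraticChar F (T ^ 2 - 4 * D) := by
  rw [Nat.card_congr (finTwoTraceDetEquiv T D), Nat.card_sigma, Nat.cast_sum]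
  simp only [FiniteField.natCard_mul_eq, sub_eq_zero]
  rw [Finset.sum_add_distrib, Finset.sum_ite, Finset.sum_const_zero, add_zero, Finset.sum_const,
    Finset.sum_const, Finset.card_univ, ← Fintype.card_subtype,
    ← Nat.card_eq_fintype_card (α := {a // _}), nsmul_eq_mul, nsmul_eq_mul,
    FiniteField.natCard_mul_sub_eq hF]
  ring

end FiniteField

theorem stmt_1 (p : ℕ) [Fact p.Prime] (hp2 : p ≠ 2) (T D : ZMod p) (hD : D ≠ 0) :
    (Nat.card {g : GL (Fin 2) (ZMod p) |
        Matrix.trace (g : Matrix (Fin 2) (Fin 2) (ZMod p)) = T ∧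
        Matrix.det (g : Matrix (Fin 2) (Fin 2) (ZMod p)) = D} : ℤ) =
      (p : ℤ) ^ 2 + (p : ℤ) * quadraticChar (ZMod p) (T ^ 2 - 4 * D) := by
  rw [GeneralLinearGroup.natCard_setOf_eq_of_isUnit_det (fun M => M.trace = T ∧ M.det = D)
      fun M hM => hM.2 ▸ hD.isUnit,
    natCard_trace_det_eq (by rwa [ZMod.ringChar_zmod_n]), ZMod.card]
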